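/- arXiv:1006.3039 — 8 statements merged into one kernel-verified Lean document; each statement's English description precedes it below -/
import Mathlib

section
/- For a monotonic multiset rewriting system, derivations on disjoint parts of a store can be combined: if S ⊎ S₁ ⤳* S ⊎ S₂ and S ⊎ S₃ ⤳* S ⊎ S₄, then S ⊎ S₁ ⊎ S₃ ⤳* S ⊎ S₂ ⊎ S₄ (the Concurrency rule of the abstract CHR semantics is admissible). -/
/-- Admissibility of the Concurrency rule of the abstract CHR semantics
for any monotonic multiset rewriting system. -/
theorem concurrency_admissible {C : Type*}
    (R : Multiset C → Multiset C → Prop)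
    (hmono : ∀ A B S : Multiset C, R A B → R (A + S) (B + S))
    (S S₁ S₂ S₃ S₄ : Multiset C)
    (h13 : Relation.ReflTransGen R (S + S₁) (S + S₂))
    (h24 : Relation.ReflTransGen R (S + S₃) (S + S₄)) :
    Relation.ReflTransGen R (S + S₁ + S₃) (S + S₂ + S₄) := by
  have h13' : Relation.ReflTransGen R (S + S₁ + S₃) (S + S₂ + S₃) :=
    h13.lift (· + S₃) fun A B => hmono A B S₃
  have h24' : Relation.ReflTransGen R (S + S₃ + S₂) (S + S₄ + S₂) :=
    h24.lift (· + S₂) fun A B => hmono A B S₂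
  rw [add_right_comm S S₃ S₂, add_right_comm S S₄ S₂] at h24'
  exact h13'.trans h24'
end

section
/- k-Concurrency: for any finite k ≥ 2, k mutually non-overlapping concurrent goal-based derivation steps operating on a shared store, where derivation i simplifies H_{Si} and propagates H_{Pi} ⊆ S with all H_{Si} pairwise disjoint and disjoint from S, can be combined into a single concurrent derivation step with side-effect (H_{P1} ∪ ... ∪ H_{Pk}) \ (H_{S1} ∪ ... ∪ H_{Sk}) by k−1 applications of the binary Goal-Concurrency rule. -/
/-!
Induction on the set of derivations. The invariant is that the steps combined so far,
started from the whole store `A ∪ S`, leave the store `(A \ H) ∪ S`, where `H` is the union of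
their simplified parts. A further step that simplifies `H'`, disjoint from `H`, is merged by one
application of the binary rule with shared store `(A \ (H ∪ H')) ∪ S`. A single step cannot
absorb the untouched goals, so they are added in the last merge, which is why at least two
derivations are needed.
-/

namespace CHR

variable {Gl C : Type*} [DecidableEq C]

/-- A side-effect `H_P \ H_S` is encoded as the pair `(H_P, H_S)`. -/
def GoalConcurrencyClosed
    (CStep : Multiset Gl × Finset C → Finset C × Finset C → Multiset Gl × Finset C → Prop) :
    Prop :=
  ∀ (G₁ G₁' G₂ G₂' Gr : Multiset Gl) (HP₁ HP₂ HS₁ HS₂ S : Finset C),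
    CStep (G₁, HS₁ ∪ HS₂ ∪ S) (HP₁, HS₁) (G₁', HS₂ ∪ S) →
    CStep (G₂, HS₁ ∪ HS₂ ∪ S) (HP₂, HS₂) (G₂', HS₁ ∪ S) →
    HP₁ ⊆ S → HP₂ ⊆ S →
    CStep (G₁ + G₂ + Gr, HS₁ ∪ HS₂ ∪ S) (HP₁ ∪ HP₂, HS₁ ∪ HS₂) (G₁' + G₂' + Gr, S)

theorem _root_.Finset.union_sdiff_union_of_disjoint {A B D : Finset C}
    (hBD : Disjoint B D) (hDA : D ⊆ A) : D ∪ A \ (B ∪ D) = A \ B := by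
  have hD : D ⊆ A \ B := Finset.subset_sdiff.2 ⟨hDA, hBD.symm⟩
  have hsplit : A \ (B ∪ D) = (A \ B) \ D := sdiff_sdiff_left.symm
  rw [hsplit, Finset.union_sdiff_of_subset hD]

variable {CStep : Multiset Gl × Finset C → Finset C × Finset C → Multiset Gl × Finset C → Prop}

theorem GoalConcurrencyClosed.merge (hGC : GoalConcurrencyClosed CStep)
    {G₁ G₁' G₂ G₂' : Multiset Gl} (Gr : Multiset Gl) {HP₁ HP₂ HS₁ HS₂ A S : Finset C}
    (hdisj : Disjoint HS₁ HS₂) (hHS₁ : HS₁ ⊆ A) (hHS₂ : HS₂ ⊆ A)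
    (hHP₁ : HP₁ ⊆ S) (hHP₂ : HP₂ ⊆ S)
    (h₁ : CStep (G₁, A ∪ S) (HP₁, HS₁) (G₁', A \ HS₁ ∪ S))
    (h₂ : CStep (G₂, A ∪ S) (HP₂, HS₂) (G₂', A \ HS₂ ∪ S)) :
    CStep (G₁ + G₂ + Gr, A ∪ S) (HP₁ ∪ HP₂, HS₁ ∪ HS₂)
      (G₁' + G₂' + Gr, A \ (HS₁ ∪ HS₂) ∪ S) := by
  have hstore : HS₁ ∪ HS₂ ∪ (A \ (HS₁ ∪ HS₂) ∪ S) = A ∪ S := by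
    rw [← Finset.union_assoc, Finset.union_sdiff_of_subset (Finset.union_subset hHS₁ hHS₂)]
  have hrest₁ : HS₂ ∪ (A \ (HS₁ ∪ HS₂) ∪ S) = A \ HS₁ ∪ S := by
    rw [← Finset.union_assoc, Finset.union_sdiff_union_of_disjoint hdisj hHS₂]
  have hrest₂ : HS₁ ∪ (A \ (HS₁ ∪ HS₂) ∪ S) = A \ HS₂ ∪ S := by
    rw [← Finset.union_assoc, Finset.union_comm HS₁ HS₂,
      Finset.union_sdiff_union_of_disjoint hdisj.symm hHS₁]
  have := hGC G₁ G₁' G₂ G₂' Gr HP₁ HP₂ HS₁ HS₂ (A \ (HS₁ ∪ HS₂) ∪ S)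
    (by rwa [hstore, hrest₁]) (by rwa [hstore, hrest₂])
    (hHP₁.trans Finset.subset_union_right) (hHP₂.trans Finset.subset_union_right)
  rwa [hstore] at this

variable {ι : Type*} [DecidableEq ι] {G G' : ι → Multiset Gl} {HP HS : ι → Finset C}
  {A S : Finset C}

theorem GoalConcurrencyClosed.biUnion (hGC : GoalConcurrencyClosed CStep) {T : Finset ι}
    (hT : T.Nonempty) (hdisj : (T : Set ι).PairwiseDisjoint HS) (hHS : T.biUnion HS ⊆ A)
    (hHP : ∀ i ∈ T, HP i ⊆ S)
    (hstep : ∀ i ∈ T, CStep (G i, A ∪ S) (HP i, HS i) (G' i, A \ HS i ∪ S)) :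
    CStep (∑ i ∈ T, G i, A ∪ S) (T.biUnion HP, T.biUnion HS)
      (∑ i ∈ T, G' i, A \ T.biUnion HS ∪ S) := by
  induction hT using Finset.Nonempty.cons_induction with
  | singleton a => simpa using hstep a (Finset.mem_singleton_self a)
  | cons a T ha hT ih =>
    simp only [Finset.cons_eq_insert, Finset.coe_insert, Set.pairwiseDisjoint_insert,
      Finset.biUnion_insert, Finset.union_subset_iff, Finset.mem_insert, forall_eq_or_imp]
      at hdisj hHS hHP hstep ⊢
    have haT : Disjoint (HS a) (T.biUnion HS) :=
      (Finset.disjoint_biUnion_right _ _ _).2 fun j hj =>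
        hdisj.2 j hj (ne_of_mem_of_not_mem hj ha).symm
    have hTP : T.biUnion HP ⊆ S := Finset.biUnion_subset.2 hHP.2
    simpa only [Finset.sum_insert ha, add_zero] using
      hGC.merge 0 haT hHS.1 hHS.2 hHP.1 hTP hstep.1 (ih hdisj.1 hHS.2 hHP.2 hstep.2)

theorem GoalConcurrencyClosed.biUnion_add (hGC : GoalConcurrencyClosed CStep) {T : Finset ι}
    (hT : T.Nontrivial) (Gr : Multiset Gl) (hdisj : (T : Set ι).PairwiseDisjoint HS)
    (hHS : T.biUnion HS ⊆ A) (hHP : ∀ i ∈ T, HP i ⊆ S)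
    (hstep : ∀ i ∈ T, CStep (G i, A ∪ S) (HP i, HS i) (G' i, A \ HS i ∪ S)) :
    CStep ((∑ i ∈ T, G i) + Gr, A ∪ S) (T.biUnion HP, T.biUnion HS)
      ((∑ i ∈ T, G' i) + Gr, A \ T.biUnion HS ∪ S) := by
  obtain ⟨a, ha⟩ := hT.nonempty
  rw [← Finset.insert_erase ha] at hdisj hHS hHP hstep ⊢
  simp only [Finset.coe_insert, Set.pairwiseDisjoint_insert, Finset.biUnion_insert,
    Finset.union_subset_iff, Finset.mem_insert, forall_eq_or_imp] at hdisj hHS hHP hstep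
  have haT : Disjoint (HS a) ((T.erase a).biUnion HS) :=
    (Finset.disjoint_biUnion_right _ _ _).2 fun j hj =>
      hdisj.2 j hj (Finset.ne_of_mem_erase hj).symm
  have hTP : (T.erase a).biUnion HP ⊆ S := Finset.biUnion_subset.2 hHP.2
  rw [Finset.sum_insert (Finset.notMem_erase a T), Finset.sum_insert (Finset.notMem_erase a T),
    Finset.biUnion_insert, Finset.biUnion_insert]
  exact hGC.merge Gr haT hHS.1 hHS.2 hHP.1 hTP hstep.1
    (hGC.biUnion hT.erase_nonempty hdisj.1 hHS.2 hHP.2 hstep.2)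

end CHR

theorem k_concurrency_general {Gl C : Type*} [DecidableEq C]
    (CStep : Multiset Gl × Finset C → Finset C × Finset C →
             Multiset Gl × Finset C → Prop)
    -- closure under the binary Goal-Concurrency rule
    (hGC : ∀ (G₁ G₁' G₂ G₂' Gr : Multiset Gl) (HP₁ HP₂ HS₁ HS₂ S : Finset C),
      CStep (G₁, HS₁ ∪ HS₂ ∪ S) (HP₁, HS₁) (G₁', HS₂ ∪ S) →
      CStep (G₂, HS₁ ∪ HS₂ ∪ S) (HP₂, HS₂) (G₂', HS₁ ∪ S) →
      HP₁ ⊆ S → HP₂ ⊆ S →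
      CStep (G₁ + G₂ + Gr, HS₁ ∪ HS₂ ∪ S) (HP₁ ∪ HP₂, HS₁ ∪ HS₂)
            (G₁' + G₂' + Gr, S))
    (k : ℕ) (hk : 2 ≤ k)
    (G G' : Fin k → Multiset Gl) (Gr : Multiset Gl)
    (HP HS : Fin k → Finset C) (S : Finset C)
    -- mutually non-overlapping: the simplified parts are pairwise disjoint
    (hdisj : ∀ i j : Fin k, i ≠ j → Disjoint (HS i) (HS j))
    -- propagated parts lie in the shared store
    (hprop : ∀ i : Fin k, HP i ⊆ S)
    -- the k individual concurrent derivation steps on the shared store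
    (hstep : ∀ i : Fin k,
      CStep (G i, (Finset.univ.biUnion HS) ∪ S) (HP i, HS i)
            (G' i, ((Finset.univ.biUnion HS) \ HS i) ∪ S)) :
    CStep ((∑ i, G i) + Gr, (Finset.univ.biUnion HS) ∪ S)
          (Finset.univ.biUnion HP, Finset.univ.biUnion HS)
          ((∑ i, G' i) + Gr, S) := by
  have hk' : (Finset.univ : Finset (Fin k)).Nontrivial :=
    Finset.univ_nontrivial_iff.2 (Fin.nontrivial_iff_two_le.2 hk)
  have := CHR.GoalConcurrencyClosed.biUnion_add hGC hk' Gr (fun i _ j _ hij => hdisj i j hij)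
    subset_rfl (fun i _ => hprop i) (fun i _ => hstep i)
  rwa [Finset.sdiff_self, Finset.empty_union] at this

/-- k-Concurrency: any relation `CStep` on CHR states (goal multiset, store
as a finite set) carrying side-effects `(H_P, H_S)` that is closed under the
binary Goal-Concurrency rule is also closed under the k-ary rule, for
k mutually non-overlapping concurrent derivation steps on a shared store. -/
theorem k_concurrency {Gl C : Type*} [DecidableEq C]
    (CStep : Multiset Gl × Finset C → Finset C × Finset C →
             Multiset Gl × Finset C → Prop)
    -- closure under the binary Goal-Concurrency rule
    (hGC : ∀ (G₁ G₁' G₂ G₂' Gr : Multiset Gl) (HP₁ HP₂ HS₁ HS₂ S : Finset C),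
      CStep (G₁, HS₁ ∪ HS₂ ∪ S) (HP₁, HS₁) (G₁', HS₂ ∪ S) →
      CStep (G₂, HS₁ ∪ HS₂ ∪ S) (HP₂, HS₂) (G₂', HS₁ ∪ S) →
      HP₁ ⊆ S → HP₂ ⊆ S →
      CStep (G₁ + G₂ + Gr, HS₁ ∪ HS₂ ∪ S) (HP₁ ∪ HP₂, HS₁ ∪ HS₂)
            (G₁' + G₂' + Gr, S))
    (k : ℕ) (hk : 2 ≤ k)
    (G G' : Fin k → Multiset Gl) (Gr : Multiset Gl)
    (HP HS : Fin k → Finset C) (S : Finset C)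
    -- mutually non-overlapping: the simplified parts are pairwise disjoint
    (hdisj : ∀ i j : Fin k, i ≠ j → Disjoint (HS i) (HS j))
    -- and disjoint from the shared part of the store
    (hdisjS : ∀ i : Fin k, Disjoint (HS i) S)
    -- propagated parts lie in the shared store
    (hprop : ∀ i : Fin k, HP i ⊆ S)
    -- the k individual concurrent derivation steps on the shared store
    (hstep : ∀ i : Fin k,
      CStep (G i, (Finset.univ.biUnion HS) ∪ S) (HP i, HS i)
            (G' i, ((Finset.univ.biUnion HS) \ HS i) ∪ S)) :
    CStep ((∑ i, G i) + Gr, (Finset.univ.biUnion HS) ∪ S)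
          (Finset.univ.biUnion HP, Finset.univ.biUnion HS)
          ((∑ i, G' i) + Gr, S) :=
  k_concurrency_general CStep hGC k hk G G' Gr HP HS S hdisj hprop hstep
end

section
/- Monotonicity of goals: if ⟨G, Sn⟩ ⤳*_G ⟨G', Sn'⟩ in the sequential goal-based CHR semantics, then for any additional goal multiset G'', ⟨G ⊎ G'', Sn⟩ ⤳*_G ⟨G' ⊎ G'', Sn'⟩. -/
/-- A single step of the sequential goal-based CHR semantics: it consumes one
distinguished goal `g`, produces new goals `G₀` and updates the store, and
it neither inspects nor modifies the remaining goal context. `Loc g G₀ Sn Sn'`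
records the admissible local rule instances (Solve, Activate, Simplify,
Propagate, Drop). -/
def GoalStep {Gl St : Type*} (Loc : Gl → Multiset Gl → St → St → Prop) :
    Multiset Gl × St → Multiset Gl × St → Prop :=
  fun σ σ' => ∃ (g : Gl) (G₀ G : Multiset Gl) (Sn Sn' : St),
    Loc g G₀ Sn Sn' ∧ σ = ({g} + G, Sn) ∧ σ' = (G₀ + G, Sn')

theorem GoalStep.add_right {Gl St : Type*} {Loc : Gl → Multiset Gl → St → St → Prop}
    (G'' : Multiset Gl) {σ σ' : Multiset Gl × St} (h : GoalStep Loc σ σ') :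
    GoalStep Loc (σ.1 + G'', σ.2) (σ'.1 + G'', σ'.2) := by
  obtain ⟨g, G₀, G, Sn, Sn', hLoc, rfl, rfl⟩ := h
  exact ⟨g, G₀, G + G'', Sn, Sn', hLoc, by rw [add_assoc], by rw [add_assoc]⟩

/-- Monotonicity of goals in the goal-based semantics: any derivation remains
valid if the goal multiset is extended by additional goals `G''`. -/
theorem goal_monotonicity {Gl St : Type*}
    (Loc : Gl → Multiset Gl → St → St → Prop)
    (G G' G'' : Multiset Gl) (Sn Sn' : St)
    (h : Relation.ReflTransGen (GoalStep Loc) (G, Sn) (G', Sn')) :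
    Relation.ReflTransGen (GoalStep Loc) (G + G'', Sn) (G' + G'', Sn') :=
  Relation.ReflTransGen.lift (fun σ => (σ.1 + G'', σ.2))
    (fun _ _ => GoalStep.add_right G'') _ _ h
end

section
/- Sequential reachability of concurrent derivation steps: assuming (a) goal monotonicity (⟨G,Sn⟩ ⤳*_G ⟨G',Sn'⟩ implies ⟨G⊎G'',Sn⟩ ⤳*_G ⟨G'⊎G'',Sn'⟩) and (b) isolation of transitive derivations, every single concurrent derivation step σ ⤳_{∥G}^δ σ' built from sequential steps via Lift and Goal-Concurrency can be replicated by a sequence of sequential goal-based derivation steps σ ⤳*_G σ' with the same side-effect δ. -/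
/-!
Induction on the concurrent derivation. A `Lift` step is a one-step sequential derivation. For
`Goal-Concurrency`, monotonicity lets the first derivation run with the goals of the second (and the
untouched goals) carried along; the second derivation then starts from a store that has already lost
`HS₁`, and isolation says it still runs there with the same side-effect.
-/

/-- Transitive closure of sequential goal-based derivation steps,
accumulating side-effects by unioning the propagated and the simplified
components. -/
inductive SeqStar {Gl C : Type*} [DecidableEq C]
    (SStep : Multiset Gl × Finset C → Finset C × Finset C →
             Multiset Gl × Finset C → Prop) :
    Multiset Gl × Finset C → Finset C × Finset C →
    Multiset Gl × Finset C → Prop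
  | refl (σ : Multiset Gl × Finset C) : SeqStar SStep σ (∅, ∅) σ
  | head {σ σ' σ'' : Multiset Gl × Finset C} {HP₁ HS₁ HP₂ HS₂ : Finset C} :
      SStep σ (HP₁, HS₁) σ' → SeqStar SStep σ' (HP₂, HS₂) σ'' →
      SeqStar SStep σ (HP₁ ∪ HP₂, HS₁ ∪ HS₂) σ''

/-- A single concurrent goal-based derivation step, built from sequential
steps via the `Lift` and (binary) `Goal-Concurrency` rules. -/
inductive ConcStep {Gl C : Type*} [DecidableEq C]
    (SStep : Multiset Gl × Finset C → Finset C × Finset C →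
             Multiset Gl × Finset C → Prop) :
    Multiset Gl × Finset C → Finset C × Finset C →
    Multiset Gl × Finset C → Prop
  | lift {σ σ' δ} : SStep σ δ σ' → ConcStep SStep σ δ σ'
  | conc {G₁ G₁' G₂ G₂' Gr : Multiset Gl} {HP₁ HP₂ HS₁ HS₂ S : Finset C} :
      ConcStep SStep (G₁, HS₁ ∪ HS₂ ∪ S) (HP₁, HS₁) (G₁', HS₂ ∪ S) →
      ConcStep SStep (G₂, HS₁ ∪ HS₂ ∪ S) (HP₂, HS₂) (G₂', HS₁ ∪ S) →
      HP₁ ⊆ S → HP₂ ⊆ S →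
      ConcStep SStep (G₁ + G₂ + Gr, HS₁ ∪ HS₂ ∪ S) (HP₁ ∪ HP₂, HS₁ ∪ HS₂)
               (G₁' + G₂' + Gr, S)

section Sequential

variable {Gl C : Type*} [DecidableEq C]

def StoreIsolated
    (SStep : Multiset Gl × Finset C → Finset C × Finset C → Multiset Gl × Finset C → Prop) :
    Prop :=
  ∀ (G G' : Multiset Gl) (HP HS S₁ S₁' S₂ : Finset C),
    Disjoint S₂ (HP ∪ HS) →
    SeqStar SStep (G, HP ∪ HS ∪ S₁ ∪ S₂) (HP, HS) (G', HP ∪ S₁' ∪ S₂) →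
    SeqStar SStep (G, HP ∪ HS ∪ S₁) (HP, HS) (G', HP ∪ S₁')

variable {SStep : Multiset Gl × Finset C → Finset C × Finset C → Multiset Gl × Finset C → Prop}

theorem SeqStar.single {σ σ' : Multiset Gl × Finset C} {δ : Finset C × Finset C}
    (h : SStep σ δ σ') : SeqStar SStep σ δ σ' := by
  simpa using SeqStar.head h (SeqStar.refl σ')

theorem SeqStar.trans {σ σ' σ'' : Multiset Gl × Finset C} {δ₁ δ₂ : Finset C × Finset C}
    (h₁ : SeqStar SStep σ δ₁ σ') (h₂ : SeqStar SStep σ' δ₂ σ'') :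
    SeqStar SStep σ (δ₁.1 ∪ δ₂.1, δ₁.2 ∪ δ₂.2) σ'' := by
  induction h₁ with
  | refl => simpa using h₂
  | head hs _ ih => simpa [Finset.union_assoc] using SeqStar.head hs (ih h₂)

/-- Isolation applied to the empty derivation. -/
theorem StoreIsolated.seqStar_of_subset (hIso : StoreIsolated SStep) (G : Multiset Gl)
    {S T : Finset C} (hST : S ⊆ T) : SeqStar SStep (G, T) (∅, ∅) (G, S) := by
  have hrefl : SeqStar SStep (G, ∅ ∪ ∅ ∪ T ∪ (T \ S)) (∅, ∅) (G, ∅ ∪ S ∪ (T \ S)) := by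
    rw [show ∅ ∪ ∅ ∪ T ∪ (T \ S) = ∅ ∪ S ∪ (T \ S) by grind]
    exact SeqStar.refl _
  simpa using hIso G G ∅ ∅ T S (T \ S) (by simp) hrefl

theorem StoreIsolated.seqStar_without_partner (hIso : StoreIsolated SStep)
    {G G' : Multiset Gl} {HP HS HS' S : Finset C} (hHP : HP ⊆ S)
    (h : SeqStar SStep (G, HS' ∪ HS ∪ S) (HP, HS) (G', HS' ∪ S)) :
    SeqStar SStep (G, HS ∪ S) (HP, HS) (G', S) := by
  have hstart : HP ∪ HS ∪ S = HS ∪ S := by grind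
  have hdisj : Disjoint (HS' \ (HS ∪ S)) (HP ∪ HS) := by grind [Finset.disjoint_left]
  have hstart' : HP ∪ HS ∪ S ∪ HS' \ (HS ∪ S) = HS' ∪ HS ∪ S := by grind
  have hend' : HP ∪ (HS' ∪ S) ∪ HS' \ (HS ∪ S) = HS' ∪ S := by grind
  have h' : SeqStar SStep (G, HP ∪ HS ∪ S ∪ HS' \ (HS ∪ S)) (HP, HS)
      (G', HP ∪ (HS' ∪ S) ∪ HS' \ (HS ∪ S)) := by
    rwa [hstart', hend']
  have hrun := hIso G G' HP HS S (HS' ∪ S) _ hdisj h'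
  rw [hstart] at hrun
  -- `S₂` must avoid `HS`, so constraints in `HS' ∩ HS` survive isolation and are dropped only here.
  have hdrop := hIso.seqStar_of_subset G' (S := S) (T := HP ∪ (HS' ∪ S)) (by grind)
  simpa using hrun.trans hdrop

end Sequential

/-- Sequential reachability of concurrent derivation steps: assuming goal
monotonicity and isolation of transitive derivations, every concurrent
derivation step can be replicated by a sequence of sequential goal-based
derivation steps with the same side-effect. -/
theorem concurrent_step_sequentially_reachable {Gl C : Type*} [DecidableEq C]
    (SStep : Multiset Gl × Finset C → Finset C × Finset C →
             Multiset Gl × Finset C → Prop)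
    -- (a) monotonicity of goals
    (hMono : ∀ (G G' G'' : Multiset Gl) (Sn Sn' : Finset C)
        (δ : Finset C × Finset C),
      SeqStar SStep (G, Sn) δ (G', Sn') →
      SeqStar SStep (G + G'', Sn) δ (G' + G'', Sn'))
    -- (b) isolation of transitive derivations
    (hIso : ∀ (G G' : Multiset Gl) (HP HS S₁ S₁' S₂ : Finset C),
      Disjoint S₂ (HP ∪ HS) →
      SeqStar SStep (G, HP ∪ HS ∪ S₁ ∪ S₂) (HP, HS) (G', HP ∪ S₁' ∪ S₂) →
      SeqStar SStep (G, HP ∪ HS ∪ S₁) (HP, HS) (G', HP ∪ S₁'))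
    (σ σ' : Multiset Gl × Finset C) (δ : Finset C × Finset C)
    (h : ConcStep SStep σ δ σ') :
    SeqStar SStep σ δ σ' := by
  induction h with
  | lift hs => exact SeqStar.single hs
  | @conc G₁ G₁' G₂ G₂' Gr HP₁ HP₂ HS₁ HS₂ S _ _ _ hHP₂ ih₁ ih₂ =>
    have first : SeqStar SStep (G₁ + G₂ + Gr, HS₁ ∪ HS₂ ∪ S) (HP₁, HS₁)
        (G₁' + (G₂ + Gr), HS₂ ∪ S) := by
      simpa only [add_assoc] using hMono _ _ (G₂ + Gr) _ _ _ ih₁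
    have second : SeqStar SStep (G₁' + (G₂ + Gr), HS₂ ∪ S) (HP₂, HS₂) (G₁' + G₂' + Gr, S) := by
      simpa only [add_left_comm G₂, add_left_comm G₂', add_assoc] using
        hMono _ _ (G₁' + Gr) _ _ _ (StoreIsolated.seqStar_without_partner hIso hHP₂ ih₂)
    exact first.trans second
end

section
/- Each goal-based Simplify or Propagate step maps to a single Rewrite step in the abstract semantics on the abstracted stores: if ⟨G,Sn⟩ steps to ⟨G',Sn'⟩ by Simplify or Propagate, then NoIds(G) ⊎ DropIds(Sn) ⤳_A NoIds(G') ⊎ DropIds(Sn'). -/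
/-- Goal/store constraints: unnumbered CHR constraints, equations and
numbered constraints `c#i`. -/
inductive GC (C E : Type) where
  | chr (c : C)
  | eqn (e : E)
  | num (c : C) (i : ℕ)

/-- `NoIds` keeps unnumbered CHR constraints and equations of a goal
multiset, dropping numbered constraints. -/
def NoIds {C E : Type} (G : Multiset (GC C E)) : Multiset (C ⊕ E) :=
  G.filterMap (fun g => match g with
    | GC.chr c => some (Sum.inl c)
    | GC.eqn e => some (Sum.inr e)
    | GC.num _ _ => none)

/-- `DropIds` strips identifiers of numbered constraints and keeps
equations. -/
def DropIds {C E : Type} (Sn : Multiset (GC C E)) : Multiset (C ⊕ E) :=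
  Sn.filterMap (fun s => match s with
    | GC.chr _ => none
    | GC.eqn e => some (Sum.inr e)
    | GC.num c _ => some (Sum.inl c))

/-- Turn a body instance (constraints and equations) into goals. -/
def toGoals {C E : Type} (B : Multiset (C ⊕ E)) : Multiset (GC C E) :=
  B.map (fun b => match b with
    | Sum.inl c => GC.chr c
    | Sum.inr e => GC.eqn e)

/-- Equations of an abstract store. -/
def EqsA {C E : Type} (S : Multiset (C ⊕ E)) : Set E :=
  {e | Sum.inr e ∈ S}

/-- Equations of a (numbered) goal-based store. -/
def EqsSt {C E : Type} (Sn : Multiset (GC C E)) : Set E :=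
  {e | GC.eqn e ∈ Sn}

/-- A CHR rule with propagated head patterns, simplified head patterns,
a guard and a body. -/
structure CHRRule (Pat Guard Body : Type) where
  hp : Multiset Pat
  hs : Multiset Pat
  guard : Guard
  body : Body

section

variable {C E Pat Guard Body Sub : Type}
  (Prog : Set (CHRRule Pat Guard Body))
  (applyC : Sub → Pat → C)
  (applyG : Sub → Guard → Guard)
  (applyB : Sub → Body → Multiset (C ⊕ E))
  (entail : Set E → Guard → Prop)

/-- The abstract CHR Rewrite step. -/
inductive ARew : Multiset (C ⊕ E) → Multiset (C ⊕ E) → Prop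
  | step (r : CHRRule Pat Guard Body) (hr : r ∈ Prog) (φ : Sub)
      (S : Multiset (C ⊕ E))
      (hg : entail (EqsA S) (applyG φ r.guard)) :
      ARew ((r.hp.map (applyC φ)).map Sum.inl +
              (r.hs.map (applyC φ)).map Sum.inl + S)
           ((r.hp.map (applyC φ)).map Sum.inl + applyB φ r.body + S)

/-- The goal-based Simplify and Propagate steps, executed on an active
numbered goal `c#j` with matching partner constraints in the store. -/
inductive SPStep :
    Multiset (GC C E) × Multiset (GC C E) →
    Multiset (GC C E) × Multiset (GC C E) → Prop
  | simplify (r : CHRRule Pat Guard Body) (hr : r ∈ Prog) (φ : Sub)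
      (c : C) (j : ℕ) (G HP HS Sn : Multiset (GC C E))
      (hhp : (r.hp.map (applyC φ)).map Sum.inl = DropIds HP)
      (hhs : (r.hs.map (applyC φ)).map Sum.inl = Sum.inl c ::ₘ DropIds HS)
      (hg : entail (EqsSt Sn) (applyG φ r.guard)) :
      SPStep (GC.num c j ::ₘ G, GC.num c j ::ₘ (HP + HS + Sn))
             (toGoals (applyB φ r.body) + G, HP + Sn)
  | propagate (r : CHRRule Pat Guard Body) (hr : r ∈ Prog) (φ : Sub)
      (c : C) (j : ℕ) (G HP HS Sn : Multiset (GC C E))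
      (hhp : (r.hp.map (applyC φ)).map Sum.inl = Sum.inl c ::ₘ DropIds HP)
      (hhs : (r.hs.map (applyC φ)).map Sum.inl = DropIds HS)
      (hg : entail (EqsSt Sn) (applyG φ r.guard)) :
      SPStep (GC.num c j ::ₘ G, GC.num c j ::ₘ (HP + HS + Sn))
             (toGoals (applyB φ r.body) + (GC.num c j ::ₘ G),
              GC.num c j ::ₘ (HP + Sn))

/-!
Abstraction forgets identifiers, so in both steps the numbered heads `c#j`, `HP`, `HS` become
exactly the instantiated rule heads, while the rest of the goal and of the store becomes the
context `S` of the abstract Rewrite step. The guard transfers because every equation of the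
concrete store survives in its abstraction.
-/

lemma NoIds_add (a b : Multiset (GC C E)) : NoIds (a + b) = NoIds a + NoIds b :=
  Multiset.filterMap_add _ _ _

lemma DropIds_add (a b : Multiset (GC C E)) : DropIds (a + b) = DropIds a + DropIds b :=
  Multiset.filterMap_add _ _ _

@[simp]
lemma NoIds_cons_num (c : C) (j : ℕ) (s : Multiset (GC C E)) :
    NoIds (GC.num c j ::ₘ s) = NoIds s := by
  simp [NoIds]

@[simp]
lemma DropIds_cons_num (c : C) (j : ℕ) (s : Multiset (GC C E)) :
    DropIds (GC.num c j ::ₘ s) = Sum.inl c ::ₘ DropIds s := by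
  simp [DropIds]

@[simp]
lemma NoIds_toGoals (B : Multiset (C ⊕ E)) : NoIds (toGoals B) = B := by
  simp only [NoIds, toGoals, Multiset.filterMap_map]
  convert Multiset.filterMap_some B using 2
  ext b
  cases b <;> rfl

lemma EqsSt_subset_EqsA_add_DropIds (A : Multiset (C ⊕ E)) (s : Multiset (GC C E)) :
    EqsSt s ⊆ EqsA (A + DropIds s) := fun e he =>
  Multiset.mem_add.2 (Or.inr ((Multiset.mem_filterMap _ _).2 ⟨GC.eqn e, he, rfl⟩))

lemma ARew.of_eq (r : CHRRule Pat Guard Body) (hr : r ∈ Prog) (φ : Sub) (S : Multiset (C ⊕ E))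
    (hg : entail (EqsA S) (applyG φ r.guard)) {A B : Multiset (C ⊕ E)}
    (hA : A = (r.hp.map (applyC φ)).map Sum.inl + (r.hs.map (applyC φ)).map Sum.inl + S)
    (hB : B = (r.hp.map (applyC φ)).map Sum.inl + applyB φ r.body + S) :
    ARew Prog applyC applyG applyB entail A B := by
  subst hA hB
  exact .step r hr φ S hg

/-- Each Simplify or Propagate step maps to a single abstract Rewrite step
on the abstracted stores, assuming guard entailment is monotonic under store
extension. -/
theorem sp_maps_to_rewrite
    (hEntailMono : ∀ (E₁ E₂ : Set E) (g : Guard),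
      entail E₁ g → E₁ ⊆ E₂ → entail E₂ g)
    (G Sn G' Sn' : Multiset (GC C E))
    (h : SPStep Prog applyC applyG applyB entail (G, Sn) (G', Sn')) :
    ARew Prog applyC applyG applyB entail
      (NoIds G + DropIds Sn) (NoIds G' + DropIds Sn') := by
  cases h with
  | simplify r hr φ c j G HP HS Sn hhp hhs hg =>
    refine ARew.of_eq _ _ _ _ _ r hr φ (NoIds G + DropIds Sn)
      (hEntailMono _ _ _ hg (EqsSt_subset_EqsA_add_DropIds _ _)) ?_ ?_
    · simp only [hhp, hhs, NoIds_cons_num, DropIds_cons_num, DropIds_add]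
      simp only [← Multiset.singleton_add]
      abel
    · simp only [hhp, NoIds_add, NoIds_toGoals, DropIds_add]
      abel
  | propagate r hr φ c j G HP HS Sn hhp hhs hg =>
    refine ARew.of_eq _ _ _ _ _ r hr φ (NoIds G + DropIds Sn)
      (hEntailMono _ _ _ hg (EqsSt_subset_EqsA_add_DropIds _ _)) ?_ ?_
    · simp only [hhp, hhs, NoIds_cons_num, DropIds_cons_num, DropIds_add]
      simp only [← Multiset.singleton_add]
      abel
    · simp only [hhp, NoIds_add, NoIds_toGoals, NoIds_cons_num, DropIds_cons_num, DropIds_add]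
      simp only [← Multiset.singleton_add]
      abel

end
end

section
/- Correspondence of termination: for a terminating CHR program, an initial CHR state ⟨G,∅⟩, and a final CHR state ⟨∅,Sn⟩, if ⟨G,∅⟩ ⤳*_{∥G} ⟨∅,Sn⟩ in the concurrent goal-based semantics, then G ⤳*_A DropIds(Sn) in the abstract semantics and DropIds(Sn) is a final store (no abstract Rewrite step applies). -/
/-!
The concurrent derivation is replayed sequentially, and the correspondence theorem for sequential
derivations turns it into an abstract derivation from `NoIds G` to `DropIds Sn`. If some abstract
rewrite applied to `DropIds Sn`, the store `Sn` would contain a rule head instance; such an instance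
is active, i.e. shares a numbered constraint with the goals, which are empty in a final state.
-/

@[simp]
lemma noIds_zero {C E : Type} : NoIds (0 : Multiset (GC C E)) = 0 :=
  Multiset.filterMap_zero _

@[simp]
lemma dropIds_zero {C E : Type} : DropIds (0 : Multiset (GC C E)) = 0 :=
  Multiset.filterMap_zero _

theorem correspondence_of_termination_general {C E : Type}
    (GStep CStep : Multiset (GC C E) × Multiset (GC C E) →
                   Multiset (GC C E) × Multiset (GC C E) → Prop)
    (AStep : Multiset (C ⊕ E) → Multiset (C ⊕ E) → Prop)
    (IsHeadInst : Multiset (GC C E) → Multiset (GC C E) → Prop)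
    -- (1) sequential reachability of concurrent derivations
    (hSeq : ∀ σ σ', Relation.ReflTransGen CStep σ σ' →
      Relation.ReflTransGen GStep σ σ')
    -- (2) correspondence of sequential derivations
    (hCorr : ∀ (G Sn G' Sn' : Multiset (GC C E)),
      Relation.ReflTransGen GStep (G, Sn) (G', Sn') →
      NoIds G + DropIds Sn = NoIds G' + DropIds Sn' ∨
      Relation.ReflTransGen AStep (NoIds G + DropIds Sn)
        (NoIds G' + DropIds Sn'))
    -- (3) in any sequentially reachable state every rule head instance of
    -- the store contains a numbered constraint that is also a goal
    (hActive : ∀ (G₀ G Sn : Multiset (GC C E)),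
      (∀ (c : C) (i : ℕ), GC.num c i ∉ G₀) →
      Relation.ReflTransGen GStep (G₀, 0) (G, Sn) →
      ∀ H, IsHeadInst Sn H →
        ∃ (c : C) (i : ℕ), GC.num c i ∈ H ∧ GC.num c i ∈ G)
    -- rule head instances in Sn correspond exactly to applicable Rewrite
    -- steps on DropIds Sn
    (hInst : ∀ Sn : Multiset (GC C E),
      (∃ T, AStep (DropIds Sn) T) ↔ ∃ H, IsHeadInst Sn H)
    (G Sn : Multiset (GC C E))
    -- initial state: all constraints are goals, none numbered
    (hinit : ∀ (c : C) (i : ℕ), GC.num c i ∉ G)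
    (h : Relation.ReflTransGen CStep (G, 0) (0, Sn)) :
    Relation.ReflTransGen AStep (NoIds G) (DropIds Sn) ∧
    ∀ T, ¬ AStep (DropIds Sn) T := by
  have hseq := hSeq _ _ h
  refine ⟨?_, fun T hT => ?_⟩
  · simpa using (hCorr G 0 0 Sn hseq).elim (fun heq => heq ▸ .refl) id
  · obtain ⟨H, hH⟩ := (hInst Sn).mp ⟨T, hT⟩
    obtain ⟨c, i, -, hgoal⟩ := hActive G 0 Sn hinit hseq H hH
    exact Multiset.notMem_zero _ hgoal

/-- Correspondence of termination: for a terminating CHR program, any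
concurrent goal-based derivation from an initial state to a final state
(empty goals) corresponds to an abstract derivation ending in a final
abstract store. -/
theorem correspondence_of_termination {C E : Type}
    (GStep CStep : Multiset (GC C E) × Multiset (GC C E) →
                   Multiset (GC C E) × Multiset (GC C E) → Prop)
    (AStep : Multiset (C ⊕ E) → Multiset (C ⊕ E) → Prop)
    (IsHeadInst : Multiset (GC C E) → Multiset (GC C E) → Prop)
    -- the CHR program is terminating: no infinite abstract derivations
    (hTerm : ∀ f : ℕ → Multiset (C ⊕ E), ¬ ∀ n, AStep (f n) (f (n + 1)))
    -- (1) sequential reachability of concurrent derivations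
    (hSeq : ∀ σ σ', Relation.ReflTransGen CStep σ σ' →
      Relation.ReflTransGen GStep σ σ')
    -- (2) correspondence of sequential derivations
    (hCorr : ∀ (G Sn G' Sn' : Multiset (GC C E)),
      Relation.ReflTransGen GStep (G, Sn) (G', Sn') →
      NoIds G + DropIds Sn = NoIds G' + DropIds Sn' ∨
      Relation.ReflTransGen AStep (NoIds G + DropIds Sn)
        (NoIds G' + DropIds Sn'))
    -- (3) in any sequentially reachable state every rule head instance of
    -- the store contains a numbered constraint that is also a goal
    (hActive : ∀ (G₀ G Sn : Multiset (GC C E)),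
      (∀ (c : C) (i : ℕ), GC.num c i ∉ G₀) →
      Relation.ReflTransGen GStep (G₀, 0) (G, Sn) →
      ∀ H, IsHeadInst Sn H →
        ∃ (c : C) (i : ℕ), GC.num c i ∈ H ∧ GC.num c i ∈ G)
    -- rule head instances in Sn correspond exactly to applicable Rewrite
    -- steps on DropIds Sn
    (hInst : ∀ Sn : Multiset (GC C E),
      (∃ T, AStep (DropIds Sn) T) ↔ ∃ H, IsHeadInst Sn H)
    (G Sn : Multiset (GC C E))
    -- initial state: all constraints are goals, none numbered
    (hinit : ∀ (c : C) (i : ℕ), GC.num c i ∉ G)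
    (h : Relation.ReflTransGen CStep (G, 0) (0, Sn)) :
    Relation.ReflTransGen AStep (NoIds G) (DropIds Sn) ∧
    ∀ T, ¬ AStep (DropIds Sn) T :=
  correspondence_of_termination_general GStep CStep AStep IsHeadInst hSeq hCorr hActive hInst G Sn
    hinit h
end

section
/- For the merge sort CHR program, from the initial store {Merge(1,e₁),...,Merge(1,e_{2^k})} with 2^k distinct totally ordered elements, exhaustive application of rules merge1 and merge2 in the abstract semantics yields a final store {Merge(k+1, m)} ∪ {Leq(a₁,a₂), Leq(a₂,a₃), ..., Leq(a_{2^k-1}, a_{2^k})} where a₁ < a₂ < ... < a_{2^k} is the sorted order of the elements and m = a₁ is the minimum; in particular the Leq constraints in the final store form a linear chain in sorted order. -/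
/-!
Along any derivation every element of `s` is owned by exactly one constraint (the second
argument of a `Leq`, or the element of a `Merge`), every `Leq(x, y)` has `x < y` with `x ∈ s`,
and the weight `∑ 2 ^ n` over the `Merge(n, _)` constraints is conserved. A potential that
charges `Leq(x, _)` with the number of elements of `s` above `x` decreases at each step, which
gives termination.

In a final store no two `Merge`s share a level and no two `Leq`s share a first argument. The
levels are then the binary digits of the weight `2 ^ (k + 1)`, so a single `Merge(k + 1, a)`
is left, and the `Leq`s form an increasing matching of `s` minus one element onto `s` minus `a`.
Its rank gaps are all at least `1` but add up to at most the number of edges, so every edge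
joins consecutive elements of `s`: the `Leq`s are the sorted chain and `a` is the minimum.
-/

/-- Constraints of the merge sort CHR program: `Leq(a,b)` and `Merge(n,a)`. -/
inductive MC (α : Type u) where
  | leq (a b : α)
  | mrg (n : ℕ) (a : α)

/-- The abstract CHR semantics of the merge sort program:
merge1 @ Leq(x,a) \ Leq(x,b) ⇔ a < b | Leq(a,b)
merge2 @ Merge(n,a), Merge(n,b) ⇔ a < b | Leq(a,b), Merge(n+1,a). -/
inductive MSStep {α : Type u} [LinearOrder α] :
    Multiset (MC α) → Multiset (MC α) → Prop
  | merge1 (x a b : α) (S : Multiset (MC α)) (h : a < b) :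
      MSStep ({MC.leq x a, MC.leq x b} + S) ({MC.leq x a, MC.leq a b} + S)
  | merge2 (n : ℕ) (a b : α) (S : Multiset (MC α)) (h : a < b) :
      MSStep ({MC.mrg n a, MC.mrg n b} + S)
             ({MC.leq a b, MC.mrg (n + 1) a} + S)

/-- The linear chain of `Leq` constraints along a list. -/
def leqChain {α : Type u} (l : List α) : Multiset (MC α) :=
  ↑((l.zip l.tail).map (fun p => MC.leq p.1 p.2))

lemma Multiset.exists_eq_pair_add {β : Type*} {x y : β} {T : Multiset β} (hx : x ∈ T)
    (hy : y ∈ T) (hxy : x ≠ y) : ∃ R, T = {x, y} + R := by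
  classical
  have hy' : y ∈ T.erase x := (Multiset.mem_erase_of_ne hxy.symm).2 hy
  refine ⟨(T.erase x).erase y, ?_⟩
  rw [Multiset.insert_eq_cons, Multiset.cons_add, Multiset.singleton_add,
    Multiset.cons_erase hy', Multiset.cons_erase hx]

lemma Multiset.eq_singleton_of_sum_map_two_pow {L : Multiset ℕ} {m : ℕ} (hL : L.Nodup)
    (h : (L.map (2 ^ ·)).sum = 2 ^ m) : L = {m} := by
  have : (⟨L, hL⟩ : Finset ℕ) = {m} := by
    rw [← Finset.toFinset_bitIndices_sum_two_pow ⟨L, hL⟩]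
    change (L.map (2 ^ ·)).sum.bitIndices.toFinset = {m}
    simp [h]
  exact congrArg Finset.val this

lemma List.SortedLT.idxOf_lt_idxOf {α : Type*} [LinearOrder α] {l : List α} (H : l.SortedLT)
    {u v : α} (hu : u ∈ l) (hv : v ∈ l) (h : u < v) : l.idxOf u < l.idxOf v :=
  (H.getIso l).symm.strictMono (show (⟨u, hu⟩ : {x // x ∈ l}) < ⟨v, hv⟩ from h)

lemma List.mem_zip_tail_of_idxOf_eq_succ {α : Type*} [DecidableEq α] {l : List α} {u v : α}
    (hv : v ∈ l) (h : l.idxOf v = l.idxOf u + 1) : (u, v) ∈ l.zip l.tail := by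
  have hlt : l.idxOf u + 1 < l.length := h ▸ List.idxOf_lt_length_of_mem hv
  have : (l.zip l.tail)[l.idxOf u]'(by simp; omega) = (u, v) := by
    simp [List.getElem_zip, List.getElem_tail, ← h, List.getElem_idxOf]
  exact this ▸ List.getElem_mem _

section Chain

open Finset

variable {α : Type*} [LinearOrder α] {s : Finset α} {E : Multiset (α × α)} {a : α}

lemma eq_min'_of_cons_map_snd (hlt : ∀ p ∈ E, p.1 < p.2) (hfst : ∀ p ∈ E, p.1 ∈ s)
    (hsnd : a ::ₘ E.map Prod.snd = s.val) (hs : s.Nonempty) : a = s.min' hs := by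
  have hmin : s.min' hs ∈ a ::ₘ E.map Prod.snd := hsnd ▸ s.min'_mem hs
  rcases Multiset.mem_cons.1 hmin with h | h
  · exact h.symm
  · obtain ⟨p, hp, hpmin⟩ := Multiset.mem_map.1 h
    have : p.1 < s.min' hs := hpmin ▸ hlt p hp
    exact absurd (s.min'_le _ (hfst p hp)) this.not_ge

/-- With `r` the rank in `s` and `z` the element of `s` that is not a first component, the gaps
`r p.2 - r p.1 ≥ 1` add up to `r z - r a ≤ #s - 1 = card E`, so every gap is `1`. -/
lemma idxOf_sort_snd_eq_succ (hlt : ∀ p ∈ E, p.1 < p.2) (hfst : E.map Prod.fst ≤ s.val)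
    (hsnd : a ::ₘ E.map Prod.snd = s.val) :
    ∀ p ∈ E, s.sort.idxOf p.2 = s.sort.idxOf p.1 + 1 := by
  set r := fun u => s.sort.idxOf u
  obtain ⟨d, hd⟩ := Multiset.le_iff_exists_add.1 hfst
  have hcard : Multiset.card E + 1 = #s := by
    simpa using congrArg Multiset.card hsnd
  obtain ⟨z, rfl⟩ : ∃ z, d = {z} := Multiset.card_eq_one.1 <| by
    simpa [← hcard, eq_comm] using congrArg Multiset.card hd
  have hz : r z < #s := by
    have : z ∈ s := by rw [← Finset.mem_val, hd]; simp
    simpa [r] using List.idxOf_lt_length_of_mem ((Finset.mem_sort (α := α) (· ≤ ·)).2 this)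
  have hmem : ∀ p ∈ E, p.1 ∈ s.sort ∧ p.2 ∈ s.sort := fun p hp => by
    simp only [Finset.mem_sort, ← Finset.mem_val]
    constructor
    · rw [hd]; exact Multiset.mem_add.2 (.inl (Multiset.mem_map_of_mem _ hp))
    · rw [← hsnd]; exact Multiset.mem_cons_of_mem (Multiset.mem_map_of_mem _ hp)
  have hle : ∀ p ∈ E, r p.1 + 1 ≤ r p.2 := fun p hp =>
    (Finset.sortedLT_sort s).idxOf_lt_idxOf (hmem p hp).1 (hmem p hp).2 (hlt p hp)
  have hsum : (E.map (r ·.2)).sum + r a = (E.map (r ·.1)).sum + r z := by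
    have h₁ := congrArg (fun M => (M.map r).sum) hsnd
    have h₂ := congrArg (fun M => (M.map r).sum) hd
    simp only [Multiset.map_cons, Multiset.sum_cons, Multiset.map_add, Multiset.sum_add,
      Multiset.map_singleton, Multiset.sum_singleton, Multiset.map_map, Function.comp_apply]
      at h₁ h₂
    omega
  by_contra! ⟨p, hp, hne⟩
  have := Multiset.sum_lt_sum hle ⟨p, hp, lt_of_le_of_ne (hle p hp) hne.symm⟩
  simp only [Multiset.sum_map_add, Multiset.map_const', Multiset.sum_replicate, smul_eq_mul,
    mul_one] at this
  omega

lemma eq_zip_sort_tail (hlt : ∀ p ∈ E, p.1 < p.2) (hfst : E.map Prod.fst ≤ s.val)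
    (hsnd : a ::ₘ E.map Prod.snd = s.val) : E = ↑(s.sort.zip s.sort.tail) := by
  have hE : E.Nodup := (Multiset.nodup_of_le hfst s.nodup).of_map _
  have hle : E ≤ ↑(s.sort.zip s.sort.tail) := (Multiset.le_iff_subset hE).2 fun p hp => by
    have hp2 : p.2 ∈ s.sort := by
      rw [Finset.mem_sort, ← Finset.mem_val, ← hsnd]
      exact Multiset.mem_cons_of_mem (Multiset.mem_map_of_mem _ hp)
    exact List.mem_zip_tail_of_idxOf_eq_succ hp2 (idxOf_sort_snd_eq_succ hlt hfst hsnd p hp)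
  refine Multiset.eq_of_le_of_card_le hle ?_
  have := congrArg Multiset.card hsnd
  simp only [Multiset.card_cons, Multiset.card_map, Finset.card_val, Multiset.coe_card,
    List.length_zip, Finset.length_sort, List.length_tail] at this ⊢
  omega

end Chain

namespace MC

variable {α : Type*}

def leqPair : MC α → Option (α × α)
  | leq a b => some (a, b)
  | mrg _ _ => none

def mrgPair : MC α → Option (ℕ × α)
  | leq _ _ => none
  | mrg n a => some (n, a)

end MC

section Store

variable {α : Type*}

def leqs (T : Multiset (MC α)) : Multiset (α × α) := T.filterMap MC.leqPair

def merges (T : Multiset (MC α)) : Multiset (ℕ × α) := T.filterMap MC.mrgPair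

@[simp] lemma leqs_cons_leq (a b : α) (T : Multiset (MC α)) :
    leqs (.leq a b ::ₘ T) = (a, b) ::ₘ leqs T :=
  Multiset.filterMap_cons_some _ _ _ rfl

@[simp] lemma leqs_cons_mrg (n : ℕ) (a : α) (T : Multiset (MC α)) :
    leqs (.mrg n a ::ₘ T) = leqs T :=
  Multiset.filterMap_cons_none _ _ rfl

@[simp] lemma merges_cons_leq (a b : α) (T : Multiset (MC α)) :
    merges (.leq a b ::ₘ T) = merges T :=
  Multiset.filterMap_cons_none _ _ rfl

@[simp] lemma merges_cons_mrg (n : ℕ) (a : α) (T : Multiset (MC α)) :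
    merges (.mrg n a ::ₘ T) = (n, a) ::ₘ merges T :=
  Multiset.filterMap_cons_some _ _ _ rfl

@[simp] lemma leqs_map_mrg (n : ℕ) (M : Multiset α) : leqs (M.map (MC.mrg n)) = 0 := by
  induction M using Multiset.induction with
  | empty => rfl
  | cons _ _ ih => simp [ih]

@[simp] lemma merges_map_mrg (n : ℕ) (M : Multiset α) :
    merges (M.map (MC.mrg n)) = M.map (n, ·) := by
  induction M using Multiset.induction with
  | empty => rfl
  | cons _ _ ih => simp [ih]

lemma mem_leqs {T : Multiset (MC α)} {p : α × α} : p ∈ leqs T ↔ .leq p.1 p.2 ∈ T := by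
  simp only [leqs, Multiset.mem_filterMap]
  constructor
  · rintro ⟨(⟨_, _⟩ | ⟨_, _⟩), hc, h⟩ <;> cases h
    exact hc
  · exact fun h => ⟨_, h, rfl⟩

lemma mem_merges {T : Multiset (MC α)} {p : ℕ × α} : p ∈ merges T ↔ .mrg p.1 p.2 ∈ T := by
  simp only [merges, Multiset.mem_filterMap]
  constructor
  · rintro ⟨(⟨_, _⟩ | ⟨_, _⟩), hc, h⟩ <;> cases h
    exact hc
  · exact fun h => ⟨_, h, rfl⟩

lemma leqs_map_add_merges_map (T : Multiset (MC α)) :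
    (leqs T).map (fun p => .leq p.1 p.2) + (merges T).map (fun p => .mrg p.1 p.2) = T := by
  induction T using Multiset.induction with
  | empty => rfl
  | cons c T ih => cases c <;> simp [ih, Multiset.add_cons]

def mergeWeight (T : Multiset (MC α)) : ℕ := ((merges T).map (2 ^ ·.1)).sum

end Store

section Invariant

variable {α : Type*} [LinearOrder α] {s : Finset α} {T T' : Multiset (MC α)}

lemma MSStep.mergeWeight_eq (h : MSStep T T') : mergeWeight T' = mergeWeight T := by
  cases h with
  | merge1 => simp [mergeWeight]
  | merge2 => simp [mergeWeight, pow_succ]; ring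

lemma mergeWeight_eq_of_reflTransGen (h : Relation.ReflTransGen MSStep T T') :
    mergeWeight T' = mergeWeight T := by
  induction h with
  | refl => rfl
  | tail _ h ih => exact h.mergeWeight_eq.trans ih

structure StoreInv (s : Finset α) (T : Multiset (MC α)) : Prop where
  owners_eq : (leqs T).map Prod.snd + (merges T).map Prod.snd = s.val
  lt_of_mem : ∀ p ∈ leqs T, p.1 < p.2
  fst_mem_of_mem : ∀ p ∈ leqs T, p.1 ∈ s

lemma storeInv_init (s : Finset α) : StoreInv s (s.val.map (MC.mrg 1)) :=
  ⟨by simp [Multiset.map_map], by simp, by simp⟩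

lemma StoreInv.snd_mem_of_mem_leqs (hI : StoreInv s T) {p : α × α} (hp : p ∈ leqs T) :
    p.2 ∈ s := by
  rw [← Finset.mem_val, ← hI.owners_eq]
  exact Multiset.mem_add.2 (.inl (Multiset.mem_map_of_mem _ hp))

lemma StoreInv.snd_mem_of_mem_merges (hI : StoreInv s T) {p : ℕ × α} (hp : p ∈ merges T) :
    p.2 ∈ s := by
  rw [← Finset.mem_val, ← hI.owners_eq]
  exact Multiset.mem_add.2 (.inr (Multiset.mem_map_of_mem _ hp))

lemma StoreInv.step (hI : StoreInv s T) (h : MSStep T T') : StoreInv s T' := by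
  cases h with
  | merge1 x a b S hab =>
    have ha : a ∈ s := hI.snd_mem_of_mem_leqs (p := (x, a)) (by simp)
    refine ⟨by rw [← hI.owners_eq]; simp, ?_, ?_⟩ <;>
      simp only [Multiset.insert_eq_cons, Multiset.cons_add, Multiset.singleton_add,
        leqs_cons_leq, Multiset.mem_cons] <;>
      rintro p (rfl | rfl | hp)
    · exact hI.lt_of_mem (x, a) (by simp)
    · exact hab
    · exact hI.lt_of_mem p (by simp [hp])
    · exact hI.fst_mem_of_mem (x, a) (by simp)
    · exact ha
    · exact hI.fst_mem_of_mem p (by simp [hp])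
  | merge2 n a b S hab =>
    have ha : a ∈ s := hI.snd_mem_of_mem_merges (p := (n, a)) (by simp)
    refine ⟨by rw [← hI.owners_eq]; simp [Multiset.add_cons], ?_, ?_⟩ <;>
      simp only [Multiset.insert_eq_cons, Multiset.cons_add, Multiset.singleton_add,
        leqs_cons_leq, leqs_cons_mrg, Multiset.mem_cons] <;>
      rintro p (rfl | hp)
    · exact hab
    · exact hI.lt_of_mem p (by simp [hp])
    · exact ha
    · exact hI.fst_mem_of_mem p (by simp [hp])

lemma StoreInv.of_reflTransGen (hI : StoreInv s T) (h : Relation.ReflTransGen MSStep T T') :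
    StoreInv s T' := by
  induction h with
  | refl => exact hI
  | tail _ h ih => exact ih.step h

end Invariant

section Termination

open Finset

variable {α : Type*} [LinearOrder α] {s : Finset α} {T T' : Multiset (MC α)}

/-- `merge1` moves the first argument of a `Leq` up to a larger element of `s`, and `merge2`
replaces a `Merge` by a `Leq`, which is always cheaper. -/
def potential (s : Finset α) : MC α → ℕ
  | .leq u _ => #{c ∈ s | u < c}
  | .mrg _ _ => #s + 1

lemma StoreInv.potential_lt (hI : StoreInv s T) (h : MSStep T T') :
    (T'.map (potential s)).sum < (T.map (potential s)).sum := by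
  cases h with
  | merge1 x a _ _ _ =>
    have hxa : x < a := hI.lt_of_mem (x, a) (by simp)
    have ha : a ∈ s := hI.snd_mem_of_mem_leqs (p := (x, a)) (by simp)
    have : #{c ∈ s | a < c} < #{c ∈ s | x < c} :=
      Finset.card_lt_card <| (Finset.ssubset_iff_of_subset
        (Finset.monotone_filter_right s fun _ _ => hxa.trans)).2 ⟨a, by simp [ha, hxa]⟩
    simpa [potential] using this
  | merge2 _ a _ _ _ =>
    simpa [potential] using Finset.card_filter_le s (a < ·)

lemma not_forall_msStep (f : ℕ → Multiset (MC α)) (h0 : StoreInv s (f 0)) :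
    ¬ ∀ n, MSStep (f n) (f (n + 1)) := fun hf =>
  have hI : ∀ n, StoreInv s (f n) := fun n => n.rec h0 fun n hn => hn.step (hf n)
  not_strictAnti_of_wellFoundedLT (fun n => ((f n).map (potential s)).sum)
    (strictAnti_nat_of_succ_lt fun n => (hI n).potential_lt (hf n))

end Termination

section Final

variable {α : Type*} [LinearOrder α] {s : Finset α} {T : Multiset (MC α)}

lemma eq_of_mrg_mem_of_final (hT : ∀ U, ¬ MSStep T U) {n : ℕ} {a b : α} (ha : .mrg n a ∈ T)
    (hb : .mrg n b ∈ T) : a = b := by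
  by_contra hne
  wlog hab : a < b generalizing a b
  · exact this hb ha (Ne.symm hne) (lt_of_le_of_ne (not_lt.1 hab) (Ne.symm hne))
  obtain ⟨R, rfl⟩ := Multiset.exists_eq_pair_add ha hb (by simpa using hne)
  exact hT _ (.merge2 n a b R hab)

lemma eq_of_leq_mem_of_final (hT : ∀ U, ¬ MSStep T U) {x a b : α} (ha : .leq x a ∈ T)
    (hb : .leq x b ∈ T) : a = b := by
  by_contra hne
  wlog hab : a < b generalizing a b
  · exact this hb ha (Ne.symm hne) (lt_of_le_of_ne (not_lt.1 hab) (Ne.symm hne))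
  obtain ⟨R, rfl⟩ := Multiset.exists_eq_pair_add ha hb (by simpa using hne)
  exact hT _ (.merge1 x a b R hab)

lemma StoreInv.nodup_map_fst_leqs (hI : StoreInv s T) (hT : ∀ U, ¬ MSStep T U) :
    ((leqs T).map Prod.fst).Nodup :=
  ((Multiset.nodup_add.1 (hI.owners_eq ▸ s.nodup)).1.of_map _).map_on fun _ hp _ hq h =>
    Prod.ext h (eq_of_leq_mem_of_final hT (mem_leqs.1 hp) (h ▸ mem_leqs.1 hq))

lemma StoreInv.nodup_map_fst_merges (hI : StoreInv s T) (hT : ∀ U, ¬ MSStep T U) :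
    ((merges T).map Prod.fst).Nodup :=
  ((Multiset.nodup_add.1 (hI.owners_eq ▸ s.nodup)).2.1.of_map _).map_on fun _ hp _ hq h =>
    Prod.ext h (eq_of_mrg_mem_of_final hT (mem_merges.1 hp) (h ▸ mem_merges.1 hq))

lemma StoreInv.merges_eq_singleton (hI : StoreInv s T) (hT : ∀ U, ¬ MSStep T U) {m : ℕ}
    (hw : mergeWeight T = 2 ^ m) : ∃ a, merges T = {(m, a)} := by
  have := Multiset.eq_singleton_of_sum_map_two_pow (hI.nodup_map_fst_merges hT)
    (by simpa [mergeWeight, Multiset.map_map] using hw)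
  obtain ⟨p, hp, rfl⟩ := Multiset.map_eq_singleton.1 this
  exact ⟨p.2, hp⟩

theorem StoreInv.eq_of_final (hI : StoreInv s T) (hT : ∀ U, ¬ MSStep T U) {m : ℕ}
    (hw : mergeWeight T = 2 ^ m) (hs : s.Nonempty) :
    T = .mrg m (s.min' hs) ::ₘ leqChain (s.sort (· ≤ ·)) := by
  obtain ⟨a, ha⟩ := hI.merges_eq_singleton hT hw
  have hsnd : a ::ₘ (leqs T).map Prod.snd = s.val := by
    rw [← hI.owners_eq, ha]; simp [add_comm]
  have hfst : (leqs T).map Prod.fst ≤ s.val :=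
    (Multiset.le_iff_subset (hI.nodup_map_fst_leqs hT)).2 fun u hu => by
      obtain ⟨p, hp, rfl⟩ := Multiset.mem_map.1 hu
      exact hI.fst_mem_of_mem p hp
  rw [← leqs_map_add_merges_map T, ha, eq_zip_sort_tail hI.lt_of_mem hfst hsnd,
    ← eq_min'_of_cons_map_snd hI.lt_of_mem hI.fst_mem_of_mem hsnd hs, leqChain]
  simp [add_comm]

end Final

/-- Merge sort correctness: from the initial store
`{Merge(1,e) | e ∈ s}` with `2^k` distinct elements, (1) there is no
infinite derivation, and (2) every reachable final store is
`{Merge(k+1, min s)}` together with the linear chain of `Leq` constraints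
in sorted order. -/
theorem mergesort_correct {α : Type} [LinearOrder α]
    (k : ℕ) (s : Finset α) (hcard : s.card = 2 ^ k) :
    (∀ f : ℕ → Multiset (MC α), f 0 = s.val.map (MC.mrg 1) →
      ¬ ∀ n, MSStep (f n) (f (n + 1))) ∧
    (∀ T : Multiset (MC α),
      Relation.ReflTransGen MSStep (s.val.map (MC.mrg 1)) T →
      (∀ U, ¬ MSStep T U) →
      T = MC.mrg (k + 1)
            (s.min' (Finset.card_pos.mp (by rw [hcard]; positivity))) ::ₘ
          leqChain (s.sort (· ≤ ·))) := by
  refine ⟨fun f hf => not_forall_msStep f (hf ▸ storeInv_init s), fun T hreach hT => ?_⟩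
  have hw : mergeWeight T = 2 ^ (k + 1) := by
    rw [mergeWeight_eq_of_reflTransGen hreach]
    simp [mergeWeight, hcard, pow_succ]
  exact ((storeInv_init s).of_reflTransGen hreach).eq_of_final hT hw _
end

section
/- For the gcd CHR program, the multiset {Gcd(n) | n ∈ M} for a finite nonempty multiset M of positive natural numbers rewrites in the abstract semantics to the final store {Gcd(g)} where g = gcd of all elements of M, after removing all Gcd(0) constraints via rule gcd1; moreover rule application preserves the invariant that the gcd of all positive arguments in the store equals g. -/
/-!
A `gcd2` step replaces `m` by `m - n` next to `n`, and a `gcd1` step drops a `0`; neither changes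
the gcd of the store. Starting from positive numbers, apply `gcd2` to two elements `n ≤ m` and then
drop the zeros: the store stays positive and nonempty while its sum strictly decreases, so by
induction on the sum one reaches a singleton, which must be `{gcd M}`. A singleton `{g}` with
`g > 0` admits no step.
-/

instance : Std.Associative Nat.gcd := ⟨Nat.gcd_assoc⟩
instance : Std.Commutative Nat.gcd := ⟨Nat.gcd_comm⟩

/-- Abstract CHR semantics of the gcd program, with `Gcd(n)` represented by
the natural number `n`:
gcd1 @ Gcd(0) ⇔ True
gcd2 @ Gcd(n) \ Gcd(m) ⇔ m ≥ n ∧ n > 0 | Gcd(m−n). -/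
inductive GcdStep : Multiset ℕ → Multiset ℕ → Prop
  | gcd1 (S : Multiset ℕ) : GcdStep (0 ::ₘ S) S
  | gcd2 (n m : ℕ) (S : Multiset ℕ) (hmn : n ≤ m) (hn : 0 < n) :
      GcdStep (n ::ₘ m ::ₘ S) (n ::ₘ (m - n) ::ₘ S)

open Multiset Relation

lemma Multiset.fold_gcd_pos {S : Multiset ℕ} (hne : S ≠ 0) (hpos : ∀ n ∈ S, 0 < n) :
    0 < S.fold Nat.gcd 0 := by
  obtain ⟨a, ha⟩ := exists_mem_of_ne_zero hne
  refine Nat.pos_of_ne_zero fun h => (hpos a ha).ne' ?_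
  exact (gcd_eq_zero_iff S).mp h a ha

lemma Multiset.sum_filter_le_sum (p : ℕ → Prop) [DecidablePred p] (S : Multiset ℕ) :
    (S.filter p).sum ≤ S.sum := by
  conv_rhs => rw [← filter_add_not p S, sum_add]
  exact Nat.le_add_right _ _

namespace GcdStep

lemma fold_gcd_eq {S S' : Multiset ℕ} (h : GcdStep S S') :
    S.fold Nat.gcd 0 = S'.fold Nat.gcd 0 := by
  cases h with
  | gcd1 S => simp [fold_cons_left]
  | gcd2 n m S hmn hn =>
      simp only [fold_cons_left, ← Nat.gcd_assoc, Nat.gcd_sub_self_right hmn]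

lemma fold_gcd_eq_of_reflTransGen {S S' : Multiset ℕ} (h : ReflTransGen GcdStep S S') :
    S.fold Nat.gcd 0 = S'.fold Nat.gcd 0 := by
  induction h with
  | refl => rfl
  | tail _ hstep ih => exact ih.trans hstep.fold_gcd_eq

lemma zero_mem_or_two_le_card {S S' : Multiset ℕ} (h : GcdStep S S') :
    0 ∈ S ∨ 2 ≤ card S := by
  cases h with
  | gcd1 _ => exact Or.inl (mem_cons_self 0 _)
  | gcd2 n m T => exact Or.inr (by simp)

lemma not_singleton {g : ℕ} (hg : 0 < g) (U : Multiset ℕ) : ¬ GcdStep {g} U := by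
  intro h
  rcases h.zero_mem_or_two_le_card with h0 | h2
  · exact hg.ne (mem_singleton.mp h0)
  · simp at h2

lemma cons (a : ℕ) {S S' : Multiset ℕ} (h : GcdStep S S') : GcdStep (a ::ₘ S) (a ::ₘ S') := by
  cases h with
  | gcd1 S => rw [cons_swap]; exact gcd1 _
  | gcd2 n m S hmn hn =>
      rw [cons_swap a n, cons_swap a m, cons_swap a n, cons_swap a (m - n)]
      exact gcd2 n m _ hmn hn

lemma reflTransGen_filter_pos (S : Multiset ℕ) :
    ReflTransGen GcdStep S (S.filter (0 < ·)) := by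
  induction S using Multiset.induction with
  | empty => rfl
  | cons a S ih =>
      rcases Nat.eq_zero_or_pos a with rfl | ha
      · rw [filter_cons_of_neg _ (lt_irrefl 0)]
        exact .head (gcd1 S) ih
      · rw [filter_cons_of_pos _ (show 0 < a from ha)]
        exact ih.lift (a ::ₘ ·) fun _ _ => cons a

lemma exists_reduct_sum_lt {a b : ℕ} {T : Multiset ℕ} (hpos : ∀ n ∈ a ::ₘ b ::ₘ T, 0 < n) :
    ∃ S', ReflTransGen GcdStep (a ::ₘ b ::ₘ T) S' ∧ S' ≠ 0 ∧ (∀ n ∈ S', 0 < n) ∧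
      S'.sum < (a ::ₘ b ::ₘ T).sum := by
  wlog hab : a ≤ b generalizing a b
  · rw [cons_swap] at hpos ⊢
    exact this hpos (le_of_not_ge hab)
  have ha : 0 < a := hpos a (mem_cons_self a _)
  refine ⟨(a ::ₘ (b - a) ::ₘ T).filter (0 < ·),
    .head (gcd2 a b T hab ha) (reflTransGen_filter_pos _),
    ne_of_mem_of_not_mem' (mem_filter.mpr ⟨mem_cons_self a _, ha⟩) (notMem_zero a),
    fun n hn => of_mem_filter hn, ?_⟩
  have := sum_filter_le_sum (0 < ·) (a ::ₘ (b - a) ::ₘ T)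
  simp only [sum_cons] at this ⊢
  omega

theorem reflTransGen_singleton_fold_gcd (S : Multiset ℕ) (hne : S ≠ 0)
    (hpos : ∀ n ∈ S, 0 < n) : ReflTransGen GcdStep S {S.fold Nat.gcd 0} := by
  induction hN : S.sum using Nat.strong_induction_on generalizing S with
  | _ N ih =>
  obtain ⟨a, T, rfl⟩ : ∃ a T, S = a ::ₘ T := by
    obtain ⟨a, ha⟩ := exists_mem_of_ne_zero hne
    exact ⟨a, exists_cons_of_mem ha⟩
  rcases eq_or_ne T 0 with rfl | hT
  · rw [cons_zero, fold_singleton, Nat.gcd_zero_right]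
  obtain ⟨b, T, rfl⟩ : ∃ b T', T = b ::ₘ T' := by
    obtain ⟨b, hb⟩ := exists_mem_of_ne_zero hT
    exact ⟨b, exists_cons_of_mem hb⟩
  obtain ⟨S', hreduce, hS'_ne, hS'_pos, hsum⟩ := exists_reduct_sum_lt hpos
  rw [fold_gcd_eq_of_reflTransGen hreduce]
  exact hreduce.trans (ih _ (hN ▸ hsum) S' hS'_ne hS'_pos rfl)

end GcdStep

/-- For a finite nonempty multiset `M` of positive numbers, the store
`{Gcd(n) | n ∈ M}` rewrites to the final store `{Gcd(g)}` where `g` is the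
gcd of M; moreover every rule application preserves the gcd of the store. -/
theorem gcd_program_correct (M : Multiset ℕ) (hne : M ≠ 0)
    (hpos : ∀ n ∈ M, 0 < n) :
    Relation.ReflTransGen GcdStep M {M.fold Nat.gcd 0} ∧
    (∀ U, ¬ GcdStep {M.fold Nat.gcd 0} U) ∧
    (∀ S S' : Multiset ℕ, GcdStep S S' →
      S.fold Nat.gcd 0 = S'.fold Nat.gcd 0) :=
  ⟨GcdStep.reflTransGen_singleton_fold_gcd M hne hpos,
    GcdStep.not_singleton (fold_gcd_pos hne hpos),
    fun _ _ h => h.fold_gcd_eq⟩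
end
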